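/- arXiv:2204.10247 — 3 statements merged into one kernel-verified Lean document; each statement's English description precedes it below -/
import Mathlib

section
/- Let n ≥ 1 and let i ≥ 0, j ≥ 1 be integers. Then: (1) the multiplication map S_i ⊗ S_j → S_{i+j} is surjective; and (2) for every ℂ-subspace U with 0 ≠ U ⊊ S_i, writing U·S_j ⊆ S_{i+j} for the span of all products u·g with u ∈ U and g ∈ S_j, one has dim(U·S_j) · C(i+n, n) > dim(U) · C(i+j+n, n). (This is the translation, via global sections, of the statement that the pair of line bundles O(i), O(i+j) on ℙ^n is strongly Kronecker stable.) -/
/-!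
Fix a monomial order. The leading monomials of the nonzero elements of `U` form a set `T` of
monomials of degree `i` with `#T = dim U`, and the leading monomials of `U · S_j` include `T + M_j`,
where `M_d` is the set of monomials of degree `d` (so `#M_d = dim S_d`). It therefore suffices that
the density `#T / #M_i` strictly increases under `T ↦ T + M_j` whenever `∅ ≠ T ⊊ M_i`. For `j = 1`
this is a weighted double count, strict because `M_i` is connected under the moves
`a ↦ a + e_k - e_l`; induction on `j` does the rest. Surjectivity of multiplication holds because
every monomial of degree `i + j` is a product of monomials of degrees `i` and `j`.
-/

open MvPolynomial Finset
open scoped Pointwise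
open Finsupp (single)

variable {σ : Type*}

lemma Finsupp.exists_add_eq_degree_eq {a : ℕ} {s : σ →₀ ℕ} (h : a ≤ s.degree) :
    ∃ u v, u + v = s ∧ u.degree = a := by
  induction a with
  | zero => exact ⟨0, s, zero_add s, map_zero _⟩
  | succ a ih =>
    obtain ⟨u, v, rfl, rfl⟩ := ih (by omega)
    obtain ⟨k, hk⟩ : ∃ k, v k ≠ 0 := by
      by_contra! hv
      have : v = 0 := Finsupp.ext hv
      simp [this] at h
    have hle : single k 1 ≤ v := Finsupp.single_le_iff.mpr (Nat.one_le_iff_ne_zero.mpr hk)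
    refine ⟨u + single k 1, v - single k 1, ?_, by simp⟩
    rw [add_assoc, add_tsub_cancel_of_le hle]

lemma MvPolynomial.homogeneousSubmodule_mul_eq {R : Type*} [CommSemiring R] (i j : ℕ) :
    homogeneousSubmodule σ R i * homogeneousSubmodule σ R j = homogeneousSubmodule σ R (i + j) := by
  refine le_antisymm (homogeneousSubmodule_mul i j) fun p hp => ?_
  rw [← p.support_sum_monomial_coeff]
  refine Submodule.sum_mem _ fun s hs => ?_
  have hdeg : s.degree = i + j := by
    rw [Finsupp.degree_eq_weight_one]; exact hp (mem_support_iff.1 hs)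
  obtain ⟨u, v, rfl, hu⟩ := Finsupp.exists_add_eq_degree_eq (s := s) (a := i) (by omega)
  have hv : v.degree = j := by rw [map_add] at hdeg; omega
  rw [← mul_one (coeff (u + v) p), ← monomial_mul]
  exact Submodule.mul_mem_mul (isHomogeneous_monomial _ hu) (isHomogeneous_monomial _ hv)

instance MvPolynomial.finite_homogeneousSubmodule {R : Type*} [CommSemiring R] [Finite σ] (d : ℕ) :
    Module.Finite R (homogeneousSubmodule σ R d) :=
  Module.Finite.iff_fg.2 (homogeneousSubmodule_fg σ R d)

section Monomials

variable [Fintype σ] [DecidableEq σ]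

variable (σ) in
def monomialsOfDegree (d : ℕ) : Finset (σ →₀ ℕ) := univ.finsuppAntidiag d

@[simp]
lemma mem_monomialsOfDegree {d : ℕ} {s : σ →₀ ℕ} : s ∈ monomialsOfDegree σ d ↔ s.degree = d := by
  simp [monomialsOfDegree, Finsupp.degree_eq_sum]

lemma card_monomialsOfDegree (d : ℕ) :
    #(monomialsOfDegree σ d) = (Fintype.card σ + d - 1).choose d := by
  simp [monomialsOfDegree, card_finsuppAntidiag_nat_eq_choose]

lemma monomialsOfDegree_add (a b : ℕ) :
    monomialsOfDegree σ a + monomialsOfDegree σ b = monomialsOfDegree σ (a + b) := by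
  ext s
  simp only [mem_add, mem_monomialsOfDegree]
  constructor
  · rintro ⟨u, rfl, v, rfl, rfl⟩
    exact map_add _ u v
  · intro hs
    obtain ⟨u, v, rfl, rfl⟩ := Finsupp.exists_add_eq_degree_eq (s := s) (a := a) (by omega)
    exact ⟨u, rfl, v, by simpa using hs, rfl⟩

lemma mem_of_forall_sub_single_mem {T : Finset (σ →₀ ℕ)}
    (hT : ∀ p ∈ T + monomialsOfDegree σ 1, ∀ l, p l ≠ 0 → p - single l 1 ∈ T)
    {a b : σ →₀ ℕ} (ha : a ∈ T) (hab : a.degree = b.degree) : b ∈ T := by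
  induction hD : ∑ x, (b x - a x) using Nat.strong_induction_on generalizing a with
  | _ D ih =>
  by_cases heq : a = b
  · exact heq ▸ ha
  have hsum : ∑ x, a x = ∑ x, b x := by rwa [Finsupp.degree_eq_sum, Finsupp.degree_eq_sum] at hab
  obtain ⟨k, hk⟩ : ∃ k, a k < b k := by
    by_contra! h
    exact heq <| Finsupp.ext fun x =>
      ((sum_eq_sum_iff_of_le fun x _ => h x).1 hsum.symm x (mem_univ x)).symm
  obtain ⟨l, hl⟩ : ∃ l, b l < a l := by
    by_contra! h
    exact heq <| Finsupp.ext fun x => (sum_eq_sum_iff_of_le fun x _ => h x).1 hsum x (mem_univ x)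
  have hkl : k ≠ l := by rintro rfl; omega
  have ha' : a + single k 1 - single l 1 ∈ T :=
    hT _ (add_mem_add ha (by simp)) l (by simp [hkl]; omega)
  refine ih _ ?_ ha' ?_ rfl
  · rw [← hD]
    refine sum_lt_sum (fun x _ => ?_) ⟨k, mem_univ k, ?_⟩
    · simp only [Finsupp.tsub_apply, Finsupp.add_apply, Finsupp.single_apply]
      split_ifs <;> subst_vars <;> omega
    · simp [hkl]; omega
  · have hle : single l 1 ≤ a + single k 1 := by simp [Finsupp.single_le_iff]; omega
    have := congrArg Finsupp.degree (tsub_add_cancel_of_le hle)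
    simp only [map_add, Finsupp.degree_single] at this
    omega

/- Double count the pairs `(p, l)` with `p ∈ T + M₁`, weighted by `p l`: those of the form
`(a + single k 1, k)` with `a ∈ T` weigh `#T * (i + #σ)` in total, all of them
`#(T + M₁) * (i + 1)`, and `mem_of_forall_sub_single_mem` provides a pair of positive weight
outside the first family. -/
lemma card_mul_lt_card_add_monomialsOfDegree_one_mul {i : ℕ} {T : Finset (σ →₀ ℕ)}
    (hT : T ⊆ monomialsOfDegree σ i) (hne : T.Nonempty) (hproper : T ≠ monomialsOfDegree σ i) :
    #T * (i + Fintype.card σ) < #(T + monomialsOfDegree σ 1) * (i + 1) := by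
  let ψ : (σ →₀ ℕ) × σ ↪ (σ →₀ ℕ) × σ :=
    ⟨fun q => (q.1 + single q.2 1, q.2), fun q r h => by
      simp only [Prod.mk.injEq] at h
      exact Prod.ext (add_right_cancel (h.2 ▸ h.1)) h.2⟩
  have hsub : (T ×ˢ univ).map ψ ⊆ (T + monomialsOfDegree σ 1) ×ˢ univ := by
    intro q hq
    obtain ⟨⟨a, k⟩, hak, rfl⟩ := mem_map.1 hq
    exact mem_product.2 ⟨add_mem_add (mem_product.1 hak).1 (by simp), mem_univ _⟩
  obtain ⟨p, hp, l, hpl, hpT⟩ :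
      ∃ p ∈ T + monomialsOfDegree σ 1, ∃ l, p l ≠ 0 ∧ p - single l 1 ∉ T := by
    by_contra! hclosed
    obtain ⟨a, ha⟩ := hne
    obtain ⟨b, hb, hbT⟩ := exists_of_ssubset (ssubset_of_subset_of_ne hT hproper)
    refine hbT (mem_of_forall_sub_single_mem hclosed ha ?_)
    rw [mem_monomialsOfDegree.1 (hT ha), mem_monomialsOfDegree.1 hb]
  have hpψ : (p, l) ∉ (T ×ˢ univ).map ψ := by
    intro hq
    obtain ⟨⟨a, k⟩, hak, h⟩ := mem_map.1 hq
    simp only [ψ] at h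
    obtain ⟨rfl, rfl⟩ := h
    exact hpT (by simpa using (mem_product.1 hak).1)
  calc #T * (i + Fintype.card σ) = ∑ q ∈ (T ×ˢ univ).map ψ, q.1 q.2 := by
        rw [sum_map, sum_product, sum_const_nat fun a ha => ?_]
        change ∑ k, (a + single k 1 : σ →₀ ℕ) k = _
        simp [sum_add_distrib, ← Finsupp.degree_eq_sum, mem_monomialsOfDegree.1 (hT ha)]
    _ < ∑ q ∈ (T + monomialsOfDegree σ 1) ×ˢ univ, q.1 q.2 :=
        sum_lt_sum_of_subset hsub (mem_product.2 ⟨hp, mem_univ l⟩) hpψ (Nat.pos_of_ne_zero hpl)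
          fun _ _ _ => Nat.zero_le _
    _ = #(T + monomialsOfDegree σ 1) * (i + 1) := by
        rw [sum_product, sum_const_nat fun p hp => ?_]
        rw [← Finsupp.degree_eq_sum, ← mem_monomialsOfDegree, ← monomialsOfDegree_add]
        exact add_subset_add_right hT hp

lemma monomialsOfDegree_nonempty [Nonempty σ] (d : ℕ) : (monomialsOfDegree σ d).Nonempty :=
  ⟨_, mem_monomialsOfDegree.2 (Finsupp.degree_single (Classical.arbitrary σ) d)⟩

lemma card_monomialsOfDegree_pos [Nonempty σ] (d : ℕ) : 0 < #(monomialsOfDegree σ d) :=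
  card_pos.2 (monomialsOfDegree_nonempty d)

lemma card_monomialsOfDegree_succ_mul [Nonempty σ] (i : ℕ) :
    #(monomialsOfDegree σ (i + 1)) * (i + 1) =
      #(monomialsOfDegree σ i) * (i + Fintype.card σ) := by
  obtain ⟨s, hs⟩ := Nat.exists_eq_add_one_of_ne_zero (Fintype.card_ne_zero (α := σ))
  rw [card_monomialsOfDegree, card_monomialsOfDegree, hs,
    show s + 1 + (i + 1) - 1 = s + i + 1 by omega, show s + 1 + i - 1 = s + i by omega,
    ← Nat.add_one_mul_choose_eq]
  ring

lemma card_mul_card_lt_card_add_monomialsOfDegree_one_mul_card [Nonempty σ] {i : ℕ}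
    {T : Finset (σ →₀ ℕ)} (hT : T ⊆ monomialsOfDegree σ i) (hne : T.Nonempty)
    (hproper : T ≠ monomialsOfDegree σ i) :
    #T * #(monomialsOfDegree σ (i + 1)) <
      #(T + monomialsOfDegree σ 1) * #(monomialsOfDegree σ i) := by
  refine Nat.lt_of_mul_lt_mul_right (a := i + 1) ?_
  calc #T * #(monomialsOfDegree σ (i + 1)) * (i + 1)
      = #T * (i + Fintype.card σ) * #(monomialsOfDegree σ i) := by
        rw [mul_assoc, card_monomialsOfDegree_succ_mul]; ring
    _ < #(T + monomialsOfDegree σ 1) * (i + 1) * #(monomialsOfDegree σ i) :=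
        Nat.mul_lt_mul_of_pos_right (card_mul_lt_card_add_monomialsOfDegree_one_mul hT hne hproper)
          (card_monomialsOfDegree_pos i)
    _ = _ := by ring

lemma card_mul_card_lt_card_add_monomialsOfDegree_mul_card [Nonempty σ] {j : ℕ} (hj : 1 ≤ j)
    {i : ℕ} {T : Finset (σ →₀ ℕ)} (hT : T ⊆ monomialsOfDegree σ i) (hne : T.Nonempty)
    (hproper : T ≠ monomialsOfDegree σ i) :
    #T * #(monomialsOfDegree σ (i + j)) <
      #(T + monomialsOfDegree σ j) * #(monomialsOfDegree σ i) := by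
  induction j, hj using Nat.le_induction generalizing i T with
  | base => exact card_mul_card_lt_card_add_monomialsOfDegree_one_mul_card hT hne hproper
  | succ j hj ih =>
    set T' := T + monomialsOfDegree σ 1
    have hT' : T' ⊆ monomialsOfDegree σ (i + 1) := by
      rw [← monomialsOfDegree_add]; exact add_subset_add_right hT
    have hassoc : T + monomialsOfDegree σ (j + 1) = T' + monomialsOfDegree σ j := by
      rw [add_assoc, monomialsOfDegree_add, add_comm 1 j]
    rw [hassoc, show i + (j + 1) = i + 1 + j by omega]
    by_cases hfull : T' = monomialsOfDegree σ (i + 1)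
    · rw [hfull, monomialsOfDegree_add, mul_comm]
      exact Nat.mul_lt_mul_of_pos_left (card_lt_card (ssubset_of_subset_of_ne hT hproper))
        (card_monomialsOfDegree_pos _)
    have h₁ := card_mul_card_lt_card_add_monomialsOfDegree_one_mul_card hT hne hproper
    have h₂ := ih hT' (hne.add (monomialsOfDegree_nonempty 1)) hfull
    refine Nat.lt_of_mul_lt_mul_right (a := #T' * #(monomialsOfDegree σ (i + 1))) ?_
    calc _ = #T * #(monomialsOfDegree σ (i + 1)) * (#T' * #(monomialsOfDegree σ (i + 1 + j))) := by
          ring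
      _ < #T' * #(monomialsOfDegree σ i) *
            (#(T' + monomialsOfDegree σ j) * #(monomialsOfDegree σ (i + 1))) :=
          Nat.mul_lt_mul'' h₁ h₂
      _ = _ := by ring

end Monomials

namespace MonomialOrder

variable (m : MonomialOrder σ)

lemma linearIndependent_of_injective_degree {R ι : Type*} [CommRing R] [NoZeroDivisors R]
    {F : ι → MvPolynomial σ R} (hF : ∀ i, F i ≠ 0) (hinj : Function.Injective (m.degree ∘ F)) :
    LinearIndependent R F := by
  classical
  rw [linearIndependent_iff']
  intro s g hsum
  by_contra! hg
  obtain ⟨i₀, hi₀, hmax⟩ := (s.filter (g · ≠ 0)).exists_max_image (m.toSyn ∘ m.degree ∘ F)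
    (by simpa [Finset.Nonempty] using hg)
  rw [mem_filter] at hi₀
  have hcoeff := congrArg (coeff (m.degree (F i₀))) hsum
  rw [coeff_sum, sum_eq_single i₀, coeff_smul, coeff_zero, smul_eq_mul] at hcoeff
  · exact mul_ne_zero hi₀.2 (m.coeff_degree_ne_zero_iff.2 (hF i₀)) hcoeff
  · intro i hi hne
    by_cases hgi : g i = 0
    · simp [hgi]
    rw [coeff_smul, m.coeff_eq_zero_of_lt, smul_zero]
    exact (hmax i (mem_filter.2 ⟨hi, hgi⟩)).lt_of_ne fun h => hne (hinj (m.toSyn.injective h))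
  · exact fun h => absurd hi₀.1 h

variable {K : Type*} [Field K] {V : Submodule K (MvPolynomial σ K)} {T : Finset (σ →₀ ℕ)}

lemma finrank_le_card (hV : ∀ f ∈ V, f ≠ 0 → m.degree f ∈ T) : Module.finrank K V ≤ #T := by
  let π : V →ₗ[K] T → K := LinearMap.pi fun d => (lcoeff K d.1).comp V.subtype
  have hπ : Function.Injective π := by
    rw [← LinearMap.ker_eq_bot, LinearMap.ker_eq_bot']
    intro f hf
    by_contra hf0
    have hf0' : (f : MvPolynomial σ K) ≠ 0 := by simpa using hf0
    exact m.coeff_degree_ne_zero_iff.2 hf0' (congrFun hf ⟨_, hV f f.2 hf0'⟩)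
  simpa using LinearMap.finrank_le_finrank_of_injective hπ

lemma card_le_finrank [FiniteDimensional K V] (hT : ∀ d ∈ T, ∃ f ∈ V, f ≠ 0 ∧ m.degree f = d) :
    #T ≤ Module.finrank K V := by
  choose F hFV hF0 hFd using hT
  let G : T → V := fun d => ⟨F d d.2, hFV d d.2⟩
  have hG : LinearIndependent K G := LinearIndependent.of_comp V.subtype <|
    m.linearIndependent_of_injective_degree (fun d => hF0 d d.2) fun d e h =>
      Subtype.ext (by simpa [G, hFd] using h)
  simpa using hG.fintype_card_le_finrank

lemma card_add_le_finrank_mul [DecidableEq σ]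
    {U W : Submodule K (MvPolynomial σ K)} [FiniteDimensional K ↥(U * W)]
    {T S : Finset (σ →₀ ℕ)} (hT : ∀ d ∈ T, ∃ f ∈ U, f ≠ 0 ∧ m.degree f = d)
    (hS : ∀ d ∈ S, monomial d 1 ∈ W) :
    #(T + S) ≤ Module.finrank K ↥(U * W) := by
  refine m.card_le_finrank fun d hd => ?_
  obtain ⟨a, ha, b, hb, rfl⟩ := mem_add.1 hd
  obtain ⟨f, hf, hf0, rfl⟩ := hT a ha
  have hb0 : monomial b (1 : K) ≠ 0 := by simp
  refine ⟨f * monomial b 1, Submodule.mul_mem_mul hf (hS b hb), mul_ne_zero hf0 hb0, ?_⟩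
  classical
  rw [m.degree_mul hf0 hb0, m.degree_monomial]
  simp

lemma degree_mem_monomialsOfDegree [Fintype σ] [DecidableEq σ] {R : Type*} [CommSemiring R]
    {d : ℕ} {f : MvPolynomial σ R} (hf : f.IsHomogeneous d) (h0 : f ≠ 0) :
    m.degree f ∈ monomialsOfDegree σ d := by
  rw [mem_monomialsOfDegree, Finsupp.degree_eq_weight_one]
  exact hf (m.coeff_degree_ne_zero_iff.2 h0)

end MonomialOrder

theorem finrank_mul_card_lt_finrank_mul_homogeneousSubmodule_mul_card [Fintype σ]
    [DecidableEq σ] [Nonempty σ] {K : Type*} [Field K] {i j : ℕ} (hj : 1 ≤ j)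
    {U : Submodule K (MvPolynomial σ K)} (hU : U ≠ ⊥)
    (hUi : U < homogeneousSubmodule σ K i) :
    Module.finrank K U * #(monomialsOfDegree σ (i + j)) <
      Module.finrank K ↥(U * homogeneousSubmodule σ K j) * #(monomialsOfDegree σ i) := by
  classical
  obtain ⟨m⟩ : Nonempty (MonomialOrder σ) := by
    let := LinearOrder.lift' _ (Fintype.equivFin σ).injective
    exact ⟨MonomialOrder.lex⟩
  set T := (monomialsOfDegree σ i).filter fun d => ∃ f ∈ U, f ≠ 0 ∧ m.degree f = d
  have hUT : ∀ d ∈ T, ∃ f ∈ U, f ≠ 0 ∧ m.degree f = d := fun d hd => (mem_filter.1 hd).2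
  have hTU : ∀ f ∈ U, f ≠ 0 → m.degree f ∈ T := fun f hf hf0 =>
    mem_filter.2 ⟨m.degree_mem_monomialsOfDegree (hUi.le hf) hf0, f, hf, hf0, rfl⟩
  have : FiniteDimensional K U := Submodule.finiteDimensional_of_le hUi.le
  have : FiniteDimensional K ↥(U * homogeneousSubmodule σ K j) := Submodule.finiteDimensional_of_le
    ((mul_le_mul_left hUi.le _).trans (homogeneousSubmodule_mul i j))
  have hdimU : Module.finrank K U = #T :=
    le_antisymm (m.finrank_le_card hTU) (m.card_le_finrank hUT)
  have hne : T.Nonempty := by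
    obtain ⟨f, hf, hf0⟩ := Submodule.exists_mem_ne_zero_of_ne_bot hU
    exact ⟨_, hTU f hf hf0⟩
  have hproper : T ≠ monomialsOfDegree σ i := fun hT => by
    have hlt := Submodule.finrank_lt_finrank_of_lt hUi
    have hle := m.finrank_le_card (V := homogeneousSubmodule σ K i) (T := T) fun f hf hf0 =>
      hT ▸ m.degree_mem_monomialsOfDegree hf hf0
    omega
  calc Module.finrank K U * #(monomialsOfDegree σ (i + j))
      < #(T + monomialsOfDegree σ j) * #(monomialsOfDegree σ i) := hdimU ▸
        card_mul_card_lt_card_add_monomialsOfDegree_mul_card hj (filter_subset _ _) hne hproper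
    _ ≤ _ := Nat.mul_le_mul_right _ <| m.card_add_le_finrank_mul hUT fun d hd =>
        isHomogeneous_monomial _ (mem_monomialsOfDegree.1 hd)

theorem stmt0_general (n i j : ℕ) (hj : 1 ≤ j) :
    (homogeneousSubmodule (Fin (n+1)) ℂ (i+j) ≤
      homogeneousSubmodule (Fin (n+1)) ℂ i * homogeneousSubmodule (Fin (n+1)) ℂ j) ∧
    (∀ U : Submodule ℂ (MvPolynomial (Fin (n+1)) ℂ),
      U ≠ ⊥ → U < homogeneousSubmodule (Fin (n+1)) ℂ i →
      Module.finrank ℂ ↥(U * homogeneousSubmodule (Fin (n+1)) ℂ j) * (i+n).choose n >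
        Module.finrank ℂ ↥U * (i+j+n).choose n) := by
  have hcard (d : ℕ) : #(monomialsOfDegree (Fin (n + 1)) d) = (d + n).choose n := by
    rw [card_monomialsOfDegree, Fintype.card_fin, show n + 1 + d - 1 = d + n by omega,
      Nat.choose_symm_add]
  refine ⟨(homogeneousSubmodule_mul_eq i j).ge, fun U hU hUi => ?_⟩
  simpa only [hcard] using finrank_mul_card_lt_finrank_mul_homogeneousSubmodule_mul_card hj hU hUi

/-- The pair of line bundles `O(i) < O(i+j)` on `ℙⁿ` is strongly Kronecker stable, stated
via global sections, i.e. spaces of homogeneous polynomials of degrees `i`, `j`, `i+j` in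
`n+1` variables: (1) the multiplication map `S_i ⊗ S_j → S_{i+j}` is surjective, and
(2) for every subspace `0 ≠ U ⊊ S_i`, the span `U·S_j` of products satisfies
`dim(U·S_j) · C(i+n,n) > dim(U) · C(i+j+n,n)`. -/
theorem stmt0 (n i j : ℕ) (hn : 1 ≤ n) (hj : 1 ≤ j) :
    (homogeneousSubmodule (Fin (n+1)) ℂ (i+j) ≤
      homogeneousSubmodule (Fin (n+1)) ℂ i * homogeneousSubmodule (Fin (n+1)) ℂ j) ∧
    (∀ U : Submodule ℂ (MvPolynomial (Fin (n+1)) ℂ),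
      U ≠ ⊥ → U < homogeneousSubmodule (Fin (n+1)) ℂ i →
      Module.finrank ℂ ↥(U * homogeneousSubmodule (Fin (n+1)) ℂ j) * (i+n).choose n >
        Module.finrank ℂ ↥U * (i+j+n).choose n) :=
  stmt0_general n i j hj
end

section
/- Let d ≥ 1 and k ≥ d be integers, and let c be an integer with 1 ≤ c < C(k, d). Suppose k_d > k_{d-1} > ⋯ > k_δ ≥ δ ≥ 1 are integers (with 1 ≤ δ ≤ d) such that c = Σ_{i=δ}^{d} C(k_i, i) (the Macaulay representation of c). Define c^{⟨d⟩} = Σ_{i=δ}^{d} C(k_i + 1, i + 1). Then (d+1) · c^{⟨d⟩} < (k+1) · c. -/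
lemma ks_ge_aux (δ d : ℕ) (ks : ℕ → ℕ) (hkδ : δ ≤ ks δ)
    (hincr : ∀ m, δ ≤ m → m < d → ks m < ks (m+1)) :
    ∀ m, δ ≤ m → m ≤ d → m ≤ ks m := by
  intro m hm hmd
  induction m, hm using Nat.le_induction with
  | base => exact hkδ
  | succ n hn IH =>
    have h1 : n ≤ ks n := IH (by omega)
    have h2 : ks n < ks (n+1) := hincr n hn (by omega)
    omega

lemma sum_lt_aux (δ : ℕ) (hδ1 : 1 ≤ δ) (ks : ℕ → ℕ) (hkδ : δ ≤ ks δ) :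
    ∀ e, δ ≤ e → (∀ m, δ ≤ m → m < e → ks m < ks (m+1)) →
    ∑ m ∈ Finset.Icc δ e, (ks m).choose m < (ks e + 1).choose e := by
  intro e he hincr
  induction e, he using Nat.le_induction with
  | base =>
    simp only [Finset.Icc_self, Finset.sum_singleton]
    obtain ⟨j, rfl⟩ : ∃ j, δ = j + 1 := ⟨δ - 1, by omega⟩
    rw [Nat.choose_succ_succ']
    have : 0 < (ks (j+1)).choose j := Nat.choose_pos (by omega)
    omega
  | succ e he IH =>
    have h1 := IH (fun m hm hme => hincr m hm (by omega))
    rw [Finset.sum_Icc_succ_top (by omega : δ ≤ e + 1)]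
    have h2 : ks e + 1 ≤ ks (e+1) := hincr e he (by omega)
    have h3 : (ks e + 1).choose e ≤ (ks (e+1)).choose e := Nat.choose_le_choose e h2
    rw [Nat.choose_succ_succ' (ks (e+1))]
    omega

lemma main_aux (d : ℕ) : ∀ k δ (ks : ℕ → ℕ), 1 ≤ d → d ≤ k → 1 ≤ δ → δ ≤ d →
    δ ≤ ks δ → (∀ m, δ ≤ m → m < d → ks m < ks (m+1)) →
    (∑ m ∈ Finset.Icc δ d, (ks m).choose m) < k.choose d →
    (d + 1) * (∑ m ∈ Finset.Icc δ d, (ks m + 1).choose (m + 1)) <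
      (k + 1) * ∑ m ∈ Finset.Icc δ d, (ks m).choose m := by
  induction d with
  | zero => intro k δ ks h1; omega
  | succ e IH =>
    intro k δ ks _ hk hδ1 hδd hkδ hincr hc2
    have hne : e + 1 ≤ ks (e+1) := ks_ge_aux δ (e+1) ks hkδ hincr (e+1) hδd le_rfl
    rcases eq_or_lt_of_le hδd with hδe | hδe
    · -- δ = e + 1 : single term
      subst hδe
      simp only [Finset.Icc_self, Finset.sum_singleton] at hc2 ⊢
      have hnk : ks (e+1) < k := by
        by_contra h
        have h2 : k.choose (e+1) ≤ (ks (e+1)).choose (e+1) :=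
          Nat.choose_le_choose _ (by omega)
        omega
      have hApos : 0 < (ks (e+1)).choose (e+1) := Nat.choose_pos hkδ
      have F1 : (ks (e+1) + 1) * (ks (e+1)).choose (e+1)
          = (ks (e+1) + 1).choose (e+2) * (e+2) := Nat.add_one_mul_choose_eq _ _
      show (e+2) * (ks (e+1) + 1).choose (e+2) < (k+1) * (ks (e+1)).choose (e+1)
      nlinarith [F1, hApos, hnk]
    · -- δ ≤ e
      have hδe' : δ ≤ e := by omega
      rw [Finset.sum_Icc_succ_top (by omega : δ ≤ e + 1)] at hc2 ⊢
      rw [Finset.sum_Icc_succ_top (by omega : δ ≤ e + 1)]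
      have hke : ks e + 1 ≤ ks (e+1) := hincr e hδe' (by omega)
      have hsum_lt := sum_lt_aux δ hδ1 ks hkδ e hδe' (fun m hm hme => hincr m hm (by omega))
      have F3 : (∑ m ∈ Finset.Icc δ e, (ks m).choose m) < (ks (e+1)).choose e :=
        lt_of_lt_of_le hsum_lt (Nat.choose_le_choose e hke)
      have F2 := IH (ks (e+1)) δ ks (by omega) (by omega) hδ1 hδe' hkδ
        (fun m hm hme => hincr m hm (by omega)) F3
      obtain ⟨n, hn⟩ : ∃ n, ks (e+1) = n := ⟨_, rfl⟩
      rw [hn] at hne hc2 F3 F2 ⊢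
      set c' := ∑ m ∈ Finset.Icc δ e, (ks m).choose m with hc'
      set c'' := ∑ m ∈ Finset.Icc δ e, (ks m + 1).choose (m+1) with hc''
      have hnk : n < k := by
        by_contra h
        have h2 : k.choose (e+1) ≤ n.choose (e+1) := Nat.choose_le_choose _ (by omega)
        omega
      have hApos : 0 < n.choose (e+1) := Nat.choose_pos hne
      have F1 : (n + 1) * n.choose (e+1) = (n+1).choose (e+2) * (e+2) :=
        Nat.add_one_mul_choose_eq n (e+1)
      obtain ⟨s, hs⟩ : ∃ s, n = e + s := ⟨n - e, by omega⟩
      have hs1 : 1 ≤ s := by omega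
      have F4' : n.choose (e+1) * (e+1) = n.choose e * s := by
        rw [Nat.choose_succ_right_eq n e]
        congr 1
        omega
      have key : (n + 1) * c' ≤ (e + 1) * c' + (e + 1) * n.choose (e+1) := by
        have h1 : s * c' ≤ s * n.choose e := Nat.mul_le_mul_left s F3.le
        nlinarith [h1, F4', hs]
      show (e+2) * (c'' + (n+1).choose (e+2)) < (k+1) * (c' + n.choose (e+1))
      have E1 : (e+1) * ((e+2) * (n+1).choose (e+2)) = (e+1) * ((n+1) * n.choose (e+1)) := by
        rw [F1]; ring
      have m1 : (e+2) * ((e+1) * c'') < (e+2) * ((n+1) * c') :=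
        Nat.mul_lt_mul_of_pos_left F2 (by omega)
      have hA2 : (e+1) * ((n+1) * n.choose (e+1)) ≤ (e+1) * (k * n.choose (e+1)) :=
        Nat.mul_le_mul_left _ (Nat.mul_le_mul (by omega) le_rfl)
      have hC2 : (e+1) * ((n+1) * c') ≤ (e+1) * (k * c') :=
        Nat.mul_le_mul_left _ (Nat.mul_le_mul (by omega) le_rfl)
      have final : (e+1) * ((e+2) * (c'' + (n+1).choose (e+2)))
          < (e+1) * ((k+1) * (c' + n.choose (e+1))) := by
        calc (e+1) * ((e+2) * (c'' + (n+1).choose (e+2)))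
            = (e+1) * ((e+2) * (n+1).choose (e+2)) + (e+2) * ((e+1) * c'') := by ring
          _ = (e+1) * ((n+1) * n.choose (e+1)) + (e+2) * ((e+1) * c'') := by rw [E1]
          _ < (e+1) * ((n+1) * n.choose (e+1)) + (e+2) * ((n+1) * c') :=
              Nat.add_lt_add_left m1 _
          _ = (e+1) * ((n+1) * n.choose (e+1)) + (e+1) * ((n+1) * c') + (n+1) * c' := by
              ring
          _ ≤ (e+1) * (k * n.choose (e+1)) + (e+1) * (k * c')
              + ((e+1) * c' + (e+1) * n.choose (e+1)) :=
              Nat.add_le_add (Nat.add_le_add hA2 hC2) key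
          _ = (e+1) * ((k+1) * (c' + n.choose (e+1))) := by ring
      exact Nat.lt_of_mul_lt_mul_left final

/-- Let `d ≥ 1`, `k ≥ d`, and `1 ≤ c < C(k,d)`.  If
`c = C(k_d, d) + C(k_{d-1}, d-1) + ⋯ + C(k_δ, δ)` is the Macaulay representation of `c`
in degree `d` (so `k_d > k_{d-1} > ⋯ > k_δ ≥ δ ≥ 1`), and
`c^{⟨d⟩} = C(k_d+1, d+1) + ⋯ + C(k_δ+1, δ+1)`, then `(d+1) · c^{⟨d⟩} < (k+1) · c`. -/
theorem stmt2 (d k c δ : ℕ) (ks : ℕ → ℕ)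
    (hd : 1 ≤ d) (hk : d ≤ k) (hc1 : 1 ≤ c) (hc2 : c < k.choose d)
    (hδ1 : 1 ≤ δ) (hδd : δ ≤ d)
    (hkδ : δ ≤ ks δ)
    (hincr : ∀ m, δ ≤ m → m < d → ks m < ks (m+1))
    (hrep : c = ∑ m ∈ Finset.Icc δ d, (ks m).choose m) :
    (d + 1) * (∑ m ∈ Finset.Icc δ d, (ks m + 1).choose (m + 1)) < (k + 1) * c := by
  subst hrep
  exact main_aux d k δ ks hd hk hδ1 hδd hkδ hincr hc2
end

section
/- Let n ≥ 1, r ≥ 1, t ≥ 1 be integers and set α = ⌈tn/r⌉ and β = ⌊tn/r⌋ (note α ≥ 1). Let M be any t × (t+r) matrix of linear forms in x_0,…,x_n. Then the following are equivalent: (i) for every integer a ≥ 0, the map Φ_{M,a} : (S_a)^{t+r} → (S_{a+1})^t is injective or surjective; (ii) Φ_{M,β−1} is injective (this condition being vacuous when β = 0) and Φ_{M,α−1} is surjective. (This is the translation of the statement that a kernel bundle 0 → V → O^{t+r} → O(1)^t → 0 on ℙ^n has natural cohomology if and only if H^0(V(β−1)) = 0 and H^1(V(α−1)) = 0.) -/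
/-!
`Φ_{M,a}` is a linear map from a space of dimension `(t + r) · C(n + a, a)` to one of dimension
`t · C(n + a + 1, a + 1)`. Since `C(n + a + 1, a + 1) · (a + 1) = C(n + a, a) · (n + a + 1)`, the
source is at most as large as the target exactly when `r (a + 1) ≤ t n`, i.e. when `a ≤ β - 1`,
and at least as large exactly when `a ≥ α - 1`.

Injectivity descends from `Φ_{M,a+1}` to `Φ_{M,a}` (multiply by `x_0`), and surjectivity ascends
from `Φ_{M,a}` to `Φ_{M,a+1}` because `S_{a+2} = S_{a+1} · S_1`. Hence (ii) gives injectivity for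
`a ≤ β - 1` and surjectivity for `a ≥ α - 1`, which covers every `a` as `α ≤ β + 1`. Conversely,
at `a = β - 1` a surjective `Φ_{M,a}` is bijective by counting dimensions, and at `a = α - 1` so is
an injective one.
-/

open MvPolynomial

/-- The map `Φ_{M,a} : (S_a)^p → (S_{a+1})^q` induced by a `q × p` matrix `M` of linear
forms in `x_0,…,x_n`, sending `(f_1,…,f_p)` to `(Σ_k M_{jk} f_k)_j` (recorded here as a
map into `q`-tuples of polynomials). -/
noncomputable def Phi (n p q a : ℕ) (M : Fin q → Fin p → MvPolynomial (Fin (n+1)) ℂ)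
    (v : Fin p → homogeneousSubmodule (Fin (n+1)) ℂ a) :
    Fin q → MvPolynomial (Fin (n+1)) ℂ :=
  fun j => ∑ k, M j k * ((v k : MvPolynomial (Fin (n+1)) ℂ))

/-- `Φ_{M,a} : (S_a)^p → (S_{a+1})^q` is injective. -/
def PhiInjective (n p q a : ℕ) (M : Fin q → Fin p → MvPolynomial (Fin (n+1)) ℂ) : Prop :=
  Function.Injective (Phi n p q a M)

/-- `Φ_{M,a} : (S_a)^p → (S_{a+1})^q` is surjective. -/
def PhiSurjective (n p q a : ℕ) (M : Fin q → Fin p → MvPolynomial (Fin (n+1)) ℂ) : Prop :=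
  ∀ w : Fin q → MvPolynomial (Fin (n+1)) ℂ,
    (∀ j, w j ∈ homogeneousSubmodule (Fin (n+1)) ℂ (a+1)) →
    ∃ v, Phi n p q a M v = w

open Module

theorem Nat.multichoose_pos {m : ℕ} (hm : 0 < m) (a : ℕ) : 0 < m.multichoose a := by
  rw [Nat.multichoose_eq]
  exact Nat.choose_pos (by omega)

theorem Nat.multichoose_add_one_mul (m a : ℕ) :
    m.multichoose (a + 1) * (a + 1) = m.multichoose a * (m + a) := by
  rcases m with _ | m
  · rcases a with _ | a <;> simp [Nat.multichoose_zero_succ]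
  · rw [Nat.multichoose_eq, Nat.multichoose_eq, show m + 1 + (a + 1) - 1 = m + a + 1 by omega,
      show m + 1 + a - 1 = m + a by omega, ← Nat.add_one_mul_choose_eq]
    ring

namespace MvPolynomial

variable {σ R : Type*}

section CommSemiring

variable [CommSemiring R]

theorem homogeneousSubmodule_succ (a : ℕ) :
    homogeneousSubmodule σ R (a + 1) =
      homogeneousSubmodule σ R a * homogeneousSubmodule σ R 1 := by
  rw [← homogeneousSubmodule_one_pow, pow_succ, homogeneousSubmodule_one_pow]

instance [Finite σ] (a : ℕ) : Module.Finite R (homogeneousSubmodule σ R a) :=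
  Module.Finite.iff_fg.mpr (homogeneousSubmodule_fg σ R a)

noncomputable def homogeneousMulRight (a : ℕ) {m : MvPolynomial σ R}
    (hm : m ∈ homogeneousSubmodule σ R 1) :
    homogeneousSubmodule σ R a →ₗ[R] homogeneousSubmodule σ R (a + 1) :=
  (LinearMap.mulRight R m).restrict fun _ hf => IsHomogeneous.mul hf hm

@[simp]
theorem coe_homogeneousMulRight {a : ℕ} {m : MvPolynomial σ R}
    (hm : m ∈ homogeneousSubmodule σ R 1) (f : homogeneousSubmodule σ R a) :
    (homogeneousMulRight a hm f : MvPolynomial σ R) = f * m :=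
  rfl

end CommSemiring

theorem finrank_homogeneousSubmodule [CommRing R] [StrongRankCondition R] [Fintype σ] (a : ℕ) :
    finrank R (homogeneousSubmodule σ R a) = (Fintype.card σ).multichoose a := by
  classical
  have hdeg : {d : σ →₀ ℕ | d.degree = a} =
      ↑(Finset.univ.finsuppAntidiag a : Finset (σ →₀ ℕ)) := by
    ext d
    simp [Finset.mem_finsuppAntidiag, Finsupp.degree_eq_sum]
  rw [homogeneousSubmodule_eq_finsupp_supported, hdeg,
    (AddMonoidAlgebra.supportedEquivFinsupp _).finrank_eq, finrank_finsupp_self]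
  simp [Finset.card_finsuppAntidiag_nat_eq_multichoose]

end MvPolynomial

section Phi

variable {n : ℕ}

theorem finrank_pi_homogeneousSubmodule (p a : ℕ) :
    finrank ℂ (Fin p → homogeneousSubmodule (Fin (n + 1)) ℂ a) = p * (n + 1).multichoose a := by
  simp [Module.finrank_pi_fintype, finrank_homogeneousSubmodule]

theorem finrank_pi_homogeneousSubmodule_succ_mul (q a : ℕ) :
    finrank ℂ (Fin q → homogeneousSubmodule (Fin (n + 1)) ℂ (a + 1)) * (a + 1) =
      q * (n + 1 + a) * (n + 1).multichoose a := by
  rw [finrank_pi_homogeneousSubmodule, mul_assoc, Nat.multichoose_add_one_mul]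
  ring

theorem finrank_pi_homogeneousSubmodule_le_iff {p q a : ℕ} :
    finrank ℂ (Fin p → homogeneousSubmodule (Fin (n + 1)) ℂ a) ≤
        finrank ℂ (Fin q → homogeneousSubmodule (Fin (n + 1)) ℂ (a + 1)) ↔
      p * (a + 1) ≤ q * (n + 1 + a) := by
  rw [← Nat.mul_le_mul_right_iff a.succ_pos, finrank_pi_homogeneousSubmodule, mul_right_comm,
    finrank_pi_homogeneousSubmodule_succ_mul]
  exact Nat.mul_le_mul_right_iff (Nat.multichoose_pos n.succ_pos a)

theorem finrank_pi_homogeneousSubmodule_succ_le_iff {p q a : ℕ} :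
    finrank ℂ (Fin q → homogeneousSubmodule (Fin (n + 1)) ℂ (a + 1)) ≤
        finrank ℂ (Fin p → homogeneousSubmodule (Fin (n + 1)) ℂ a) ↔
      q * (n + 1 + a) ≤ p * (a + 1) := by
  rw [← Nat.mul_le_mul_right_iff a.succ_pos, finrank_pi_homogeneousSubmodule_succ_mul,
    finrank_pi_homogeneousSubmodule, mul_right_comm p]
  exact Nat.mul_le_mul_right_iff (Nat.multichoose_pos n.succ_pos a)

variable {p q : ℕ} {M : Fin q → Fin p → MvPolynomial (Fin (n + 1)) ℂ}

theorem phi_mul_right {a : ℕ} (v : Fin p → homogeneousSubmodule (Fin (n + 1)) ℂ a)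
    {m : MvPolynomial (Fin (n + 1)) ℂ} (hm : m ∈ homogeneousSubmodule (Fin (n + 1)) ℂ 1) :
    Phi n p q (a + 1) M (homogeneousMulRight a hm ∘ v) = fun j => Phi n p q a M v j * m := by
  funext j
  simp [Phi, Finset.sum_mul, mul_assoc]

theorem antitone_phiInjective : Antitone fun a => PhiInjective n p q a M := by
  refine antitone_nat_of_succ_le fun a h v w hvw => ?_
  have hX := isHomogeneous_X ℂ (0 : Fin (n + 1))
  have hmul : Function.Injective (homogeneousMulRight a hX) := fun f g hfg =>
    Subtype.ext (mul_left_injective₀ (X_ne_zero 0) (congrArg Subtype.val hfg))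
  exact hmul.comp_left (h (by rw [phi_mul_right v hX, phi_mul_right w hX, hvw]))

variable (hM : ∀ j k, M j k ∈ homogeneousSubmodule (Fin (n + 1)) ℂ 1)
include hM

theorem phi_mem_homogeneousSubmodule {a : ℕ}
    (v : Fin p → homogeneousSubmodule (Fin (n + 1)) ℂ a) (j : Fin q) :
    Phi n p q a M v j ∈ homogeneousSubmodule (Fin (n + 1)) ℂ (a + 1) := by
  rw [add_comm a 1]
  exact IsHomogeneous.sum _ _ _ fun k _ => IsHomogeneous.mul (hM j k) (v k).2

noncomputable def phiLinearMap (a : ℕ) :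
    (Fin p → homogeneousSubmodule (Fin (n + 1)) ℂ a) →ₗ[ℂ]
      (Fin q → homogeneousSubmodule (Fin (n + 1)) ℂ (a + 1)) where
  toFun v j := ⟨Phi n p q a M v j, phi_mem_homogeneousSubmodule hM v j⟩
  map_add' v w := funext fun j => Subtype.ext <| by
    simp [Phi, mul_add, Finset.sum_add_distrib]
  map_smul' c v := funext fun j => Subtype.ext <| by
    simp [Phi, Finset.smul_sum]

@[simp]
theorem coe_phiLinearMap_apply {a : ℕ} (v : Fin p → homogeneousSubmodule (Fin (n + 1)) ℂ a)
    (j : Fin q) : (phiLinearMap hM a v j : MvPolynomial (Fin (n + 1)) ℂ) = Phi n p q a M v j :=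
  rfl

theorem phiInjective_iff {a : ℕ} :
    PhiInjective n p q a M ↔ Function.Injective (phiLinearMap hM a) :=
  Subtype.val_injective.comp_left.of_comp_iff (phiLinearMap hM a)

theorem phiSurjective_iff {a : ℕ} :
    PhiSurjective n p q a M ↔ Function.Surjective (phiLinearMap hM a) := by
  refine ⟨fun h w => ?_, fun h w hw => ?_⟩
  · obtain ⟨v, hv⟩ := h (fun j => w j) fun j => (w j).2
    exact ⟨v, funext fun j => Subtype.ext (congrFun hv j)⟩
  · obtain ⟨v, hv⟩ := h fun j => ⟨w j, hw j⟩
    exact ⟨v, funext fun j => congrArg Subtype.val (congrFun hv j)⟩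

theorem monotone_phiSurjective : Monotone fun a => PhiSurjective n p q a M := by
  refine monotone_nat_of_le_succ fun a h => ?_
  simp only [phiSurjective_iff hM] at h ⊢
  rw [← LinearMap.range_eq_top, eq_top_iff, ← Submodule.pi_top Set.univ,
    ← Submodule.iSup_map_single]
  refine iSup_le fun j => ?_
  rw [Submodule.map_le_iff_le_comap, ← Submodule.map_le_map_iff_of_injective
    (Submodule.injective_subtype _), Submodule.map_subtype_top]
  refine (homogeneousSubmodule_succ (a + 1)).le.trans (Submodule.mul_le.mpr fun x hx y hy => ?_)
  obtain ⟨v, hv⟩ := h (LinearMap.single ℂ _ j ⟨x, hx⟩)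
  refine ⟨homogeneousMulRight (a + 1) hy ⟨x, hx⟩, ⟨homogeneousMulRight a hy ∘ v, ?_⟩, rfl⟩
  funext i
  have hvi : Phi n p q a M v i = _ := congrArg Subtype.val (congrFun hv i)
  apply Subtype.ext
  rcases eq_or_ne i j with rfl | hij <;> simp [phi_mul_right, *]

theorem phiInjective_of_phiSurjective {a : ℕ} (h : p * (a + 1) ≤ q * (n + 1 + a))
    (hsurj : PhiSurjective n p q a M) : PhiInjective n p q a M := by
  rw [phiSurjective_iff hM] at hsurj
  rw [phiInjective_iff hM, LinearMap.injective_iff_surjective_of_finrank_eq_finrank]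
  · exact hsurj
  · exact le_antisymm (finrank_pi_homogeneousSubmodule_le_iff.mpr h)
      (LinearMap.finrank_le_finrank_of_surjective hsurj)

theorem phiSurjective_of_phiInjective {a : ℕ} (h : q * (n + 1 + a) ≤ p * (a + 1))
    (hinj : PhiInjective n p q a M) : PhiSurjective n p q a M := by
  rw [phiInjective_iff hM] at hinj
  rw [phiSurjective_iff hM, ← LinearMap.injective_iff_surjective_of_finrank_eq_finrank]
  · exact hinj
  · exact le_antisymm (LinearMap.finrank_le_finrank_of_injective hinj)
      (finrank_pi_homogeneousSubmodule_succ_le_iff.mpr h)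

end Phi

theorem stmt7_general (n r t : ℕ) (hr : 1 ≤ r)
    (M : Fin t → Fin (t + r) → MvPolynomial (Fin (n+1)) ℂ)
    (hM : ∀ j k, M j k ∈ homogeneousSubmodule (Fin (n+1)) ℂ 1) :
    (∀ a : ℕ, PhiInjective n (t + r) t a M ∨ PhiSurjective n (t + r) t a M) ↔
      ((1 ≤ t * n / r → PhiInjective n (t + r) t (t * n / r - 1) M) ∧
        PhiSurjective n (t + r) t ((t * n + r - 1) / r - 1) M) := by
  set β := t * n / r
  set α := (t * n + r - 1) / r
  have hβ : r * β ≤ t * n := Nat.mul_div_le (t * n) r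
  have hα : t * n ≤ r * α := by
    have : t * n + r - 1 < α * r + r := Nat.lt_div_mul_add hr
    rw [mul_comm r]
    omega
  have hαβ : α ≤ β + 1 :=
    (Nat.div_le_div_right (Nat.sub_le _ 1)).trans_eq (Nat.add_div_right _ hr)
  clear_value α β
  constructor
  · intro H
    refine ⟨fun hβ1 => (H (β - 1)).elim id (phiInjective_of_phiSurjective hM ?_),
      (H (α - 1)).elim (phiSurjective_of_phiInjective hM ?_) id⟩
    · obtain ⟨b, rfl⟩ : ∃ b, β = b + 1 := ⟨β - 1, by omega⟩
      simp only [add_tsub_cancel_right]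
      linarith
    · have : r * α ≤ r * (α - 1 + 1) := Nat.mul_le_mul_left r (by omega)
      linarith
  · rintro ⟨hinj, hsurj⟩ a
    rcases lt_or_ge a β with ha | ha
    · exact Or.inl (antitone_phiInjective (by omega : a ≤ β - 1) (hinj (by omega)))
    · exact Or.inr (monotone_phiSurjective hM (by omega : α - 1 ≤ a) hsurj)

/-- Translation of Lemma `lem-basicbound`: for a `t × (t+r)` matrix `M` of linear forms
in `x_0,…,x_n`, with `α = ⌈tn/r⌉` and `β = ⌊tn/r⌋`, every map
`Φ_{M,a} : (S_a)^{t+r} → (S_{a+1})^t` (for `a ≥ 0`) is injective or surjective if and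
only if `Φ_{M,β−1}` is injective (vacuously when `β = 0`) and `Φ_{M,α−1}` is
surjective. -/
theorem stmt7 (n r t : ℕ) (hn : 1 ≤ n) (hr : 1 ≤ r) (ht : 1 ≤ t)
    (M : Fin t → Fin (t + r) → MvPolynomial (Fin (n+1)) ℂ)
    (hM : ∀ j k, M j k ∈ homogeneousSubmodule (Fin (n+1)) ℂ 1) :
    (∀ a : ℕ, PhiInjective n (t + r) t a M ∨ PhiSurjective n (t + r) t a M) ↔
      ((1 ≤ t * n / r → PhiInjective n (t + r) t (t * n / r - 1) M) ∧
        PhiSurjective n (t + r) t ((t * n + r - 1) / r - 1) M) :=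
  stmt7_general n r t hr M hM
end
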